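/- arXiv:1009.5664 — 2 statements merged into one kernel-verified Lean document; each statement's English description precedes it below -/
import Mathlib

section
/- Theorem 2. Let β ∈ [0,1], n ∈ ℕ, and let u : {k ∈ ℕ₀³ : k₁+k₂+k₃ ≤ n} → [0,∞] be a function such that, for every m ∈ {0,...,n}, the restriction of u to {k ∈ ℕ₀³ : k₁+k₂+k₃ = m} is an upper β-confidence bound for the parameter p ↦ min((1−p₂)/(1−p₁), 1) in the trinomial model (M_{m,p} : p ∈ Prob({1,2,3})), where x/0 := ∞ for x > 0. Then the function k ↦ u(k₁₀, k₀₁, k₁₁), defined on {k ∈ ℕ₀^({0,1}²) : k₊₊ = n}, is an upper β-confidence bound for the parameter (π,χ) ↦ χ^{(1)}_{1|1} in the restricted latent class model P_{2,≤}. -/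
/-!
Given the count `k₀₀`, which is binomial, the counts `(k₁₀, k₀₁, k₁₁)` of a multinomial sample
with cell probabilities `q = μ₂(π,χ)` are trinomial with `n - k₀₀` trials and parameter `p`, the
law `q` conditioned off the cell `00`. A bound of level `β` at every trinomial sample size therefore
keeps level `β` under the binomial mixture. It remains to compare the parameters: in terms of the
two tests, `(1 - p₂)/(1 - p₁) = P(T₁ = 1)/P(T₂ = 1)`, and `χ^{(1)}_{1|1} · P(T₂ = 1) ≤ P(T₁ = 1)`
because the restriction `χ^{(1)}_{0|0} ≤ χ^{(2)}_{0|0}` says `χ^{(2)}_{1|0} ≤ χ^{(1)}_{1|0}`.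
-/

open scoped BigOperators ENNReal

noncomputable section

/-- `p` is a discrete probability density on the finite set `X`,
i.e. a function `X → [0,1]` summing to `1`. -/
def IsProb {X : Type*} [Fintype X] (p : X → ℝ) : Prop :=
  (∀ x, 0 ≤ p x ∧ p x ≤ 1) ∧ ∑ x, p x = 1

/-- `χ` is a Markov transition density: `χ x` is a probability density for each `x`. -/
def IsMarkov {X Y : Type*} [Fintype Y] (χ : X → Y → ℝ) : Prop :=
  ∀ x, IsProb (χ x)

/-- The mixture density `μ₁(π,χ)` on `{0,1}` (indices: `χ i j = χ_{j|i}`). -/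
def mu1 (π : Fin 2 → ℝ) (χ : Fin 2 → Fin 2 → ℝ) : Fin 2 → ℝ :=
  fun j => ∑ i, π i * χ i j

/-- The mixture density `μ₂(π,χ)` on `{0,1}²` (indices: `χ i j = χ_{j|i}`). -/
def mu2 (π : Fin 2 → ℝ) (χ : Fin 2 → Fin 2 × Fin 2 → ℝ) : Fin 2 × Fin 2 → ℝ :=
  fun j => ∑ i, π i * χ i j

/-- First-test characteristic: `chi1 χ i ι = χ^{(1)}_{ι|i} = χ_{ι0|i} + χ_{ι1|i}`. -/
def chi1 (χ : Fin 2 → Fin 2 × Fin 2 → ℝ) : Fin 2 → Fin 2 → ℝ :=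
  fun i ι => χ i (ι, 0) + χ i (ι, 1)

/-- Second-test characteristic: `chi2 χ i ι = χ^{(2)}_{ι|i} = χ_{0ι|i} + χ_{1ι|i}`. -/
def chi2 (χ : Fin 2 → Fin 2 × Fin 2 → ℝ) : Fin 2 → Fin 2 → ℝ :=
  fun i ι => χ i (0, ι) + χ i (1, ι)

/-- The multinomial point mass `M_{n,q}({k}) = n! ∏_x q_x^{k_x}/k_x!`. -/
def mPMF {X : Type*} [Fintype X] (n : ℕ) (q : X → ℝ) (k : X → ℕ) : ℝ :=
  (n.factorial : ℝ) * ∏ x, q x ^ k x / ((k x).factorial : ℝ)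

/-- `mProb n q S` is the probability, under the multinomial distribution `M_{n,q}`
(supported on `{k : Σ_x k_x = n}`), of the event `S`. -/
def mProb {X : Type*} [Fintype X] (n : ℕ) (q : X → ℝ) (S : Set (X → ℕ)) : ℝ :=
  ∑' k : X → ℕ, Set.indicator {k | (∑ x, k x) = n ∧ k ∈ S} (mPMF n q) k

open Finset

lemma isProb_of_nonneg_of_sum_eq_one {X : Type*} [Fintype X] {p : X → ℝ} (h0 : ∀ x, 0 ≤ p x)
    (h1 : ∑ x, p x = 1) : IsProb p :=
  ⟨fun x => ⟨h0 x, h1 ▸ single_le_sum (fun y _ => h0 y) (mem_univ x)⟩, h1⟩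

lemma IsProb.comp_equiv {X Y : Type*} [Fintype X] [Fintype Y] {p : X → ℝ} (hp : IsProb p)
    (e : Y ≃ X) : IsProb (p ∘ e) :=
  ⟨fun y => hp.1 (e y), (e.sum_comp p).trans hp.2⟩

section Multinomial

variable {X : Type*} [Fintype X]

lemma mPMF_nonneg {q : X → ℝ} (hq : ∀ x, 0 ≤ q x) (n : ℕ) (k : X → ℕ) : 0 ≤ mPMF n q k :=
  mul_nonneg (Nat.cast_nonneg _) (prod_nonneg fun x _ => div_nonneg (pow_nonneg (hq x) _)
    (Nat.cast_nonneg _))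

lemma mProb_eq_sum_piFinset [DecidableEq X] {n N : ℕ} (hnN : n ≤ N) (q : X → ℝ)
    (S : Set (X → ℕ)) :
    mProb n q S = ∑ k ∈ Fintype.piFinset fun _ => range (N + 1),
      {k | ∑ x, k x = n ∧ k ∈ S}.indicator (mPMF n q) k := by
  refine tsum_eq_sum fun k hk => Set.indicator_of_notMem ?_ _
  rintro ⟨hsum, -⟩
  obtain ⟨x, hx⟩ := not_forall.1 (mt Fintype.mem_piFinset.2 hk)
  have := single_le_sum (fun y _ => Nat.zero_le (k y)) (mem_univ x)
  rw [mem_range] at hx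
  omega

lemma mProb_mono {q : X → ℝ} (hq : ∀ x, 0 ≤ q x) (n : ℕ) {S T : Set (X → ℕ)} (hST : S ⊆ T) :
    mProb n q S ≤ mProb n q T := by
  classical
  rw [mProb_eq_sum_piFinset le_rfl, mProb_eq_sum_piFinset le_rfl]
  exact sum_le_sum fun k _ => Set.indicator_le_indicator_of_subset
    (Set.ofPred_subset_ofPred.2 fun _ hk => ⟨hk.1, hST hk.2⟩) (mPMF_nonneg hq n) k

lemma mProb_comp_equiv {Y : Type*} [Fintype Y] (e : Y ≃ X) (n : ℕ) (q : X → ℝ)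
    (S : Set (Y → ℕ)) : mProb n (q ∘ e) S = mProb n q {k | k ∘ e ∈ S} := by
  classical
  rw [mProb, mProb, ← (e.arrowCongr (Equiv.refl ℕ)).tsum_eq]
  refine tsum_congr fun k => ?_
  have hk : (e.arrowCongr (Equiv.refl ℕ) k) ∘ e = k := by ext; simp
  have hsum : ∑ x, e.arrowCongr (Equiv.refl ℕ) k x = ∑ y, k y :=
    (e.sum_comp _).symm.trans (by simp)
  have hpmf : mPMF n q (e.arrowCongr (Equiv.refl ℕ) k) = mPMF n (q ∘ e) k := by
    rw [mPMF, mPMF, ← e.prod_comp]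
    simp
  simp only [Set.indicator_apply, Set.mem_ofPred_eq, hk, hsum, hpmf]

end Multinomial

section SplitFirstCell

variable {d : ℕ} {q : Fin (d + 1) → ℝ} {p : Fin d → ℝ}

lemma mPMF_cons (hqp : ∀ i, q i.succ = (1 - q 0) * p i) {m n : ℕ} (hmn : m ≤ n)
    {t : Fin d → ℕ} (ht : ∑ i, t i = m) :
    mPMF n q (Fin.cons (n - m) t) = n.choose m * q 0 ^ (n - m) * (1 - q 0) ^ m * mPMF m p t := by
  have hfact : (n.factorial : ℝ) = n.choose m * m.factorial * (n - m).factorial := by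
    exact_mod_cast (Nat.choose_mul_factorial_mul_factorial hmn).symm
  have hpow : ∏ i, (1 - q 0) ^ t i = (1 - q 0) ^ m := by rw [prod_pow_eq_pow_sum, ht]
  simp only [mPMF, Fin.prod_univ_succ, Fin.cons_zero, Fin.cons_succ, hqp, mul_pow, mul_div_assoc,
    prod_mul_distrib, hpow, hfact]
  have : ((n - m).factorial : ℝ) ≠ 0 := by positivity
  field_simp

lemma mProb_tail_eq_sum (hqp : ∀ i, q i.succ = (1 - q 0) * p i) (n : ℕ) (S : Set (Fin d → ℕ)) :
    mProb n q {x | Fin.tail x ∈ S} = ∑ m ∈ range (n + 1),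
      n.choose m * q 0 ^ (n - m) * (1 - q 0) ^ m * mProb m p S := by
  classical
  rw [mProb_eq_sum_piFinset le_rfl,
    sum_equiv (Fin.consEquiv fun _ => ℕ).symm
      (t := range (n + 1) ×ˢ Fintype.piFinset fun _ => range (n + 1))
      (g := fun y => {x : Fin (d + 1) → ℕ | ∑ i, x i = n ∧ Fin.tail x ∈ S}.indicator
        (mPMF n q) (Fin.cons y.1 y.2))
      (fun x => by simp [Fin.forall_fin_succ, Fin.tail]) (fun x _ => by simp),
    sum_product, ← sum_range_reflect]
  refine sum_congr rfl fun m hm => ?_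
  have hmn : m ≤ n := Nat.lt_succ_iff.1 (mem_range.1 hm)
  rw [show n + 1 - 1 - m = n - m by omega, mProb_eq_sum_piFinset hmn, mul_sum]
  refine sum_congr rfl fun t _ => ?_
  simp only [Set.indicator_apply, Set.mem_ofPred_eq, Fin.sum_cons, Fin.tail_cons]
  by_cases ht : ∑ i, t i = m
  · simp [ht, hmn, mPMF_cons hqp hmn ht]
  · have : n - m + ∑ i, t i ≠ n := by omega
    simp [ht, this]

lemma le_mProb_tail (hq0 : 0 ≤ q 0) (hq1 : q 0 ≤ 1) (hqp : ∀ i, q i.succ = (1 - q 0) * p i)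
    {n : ℕ} {β : ℝ} {S : Set (Fin d → ℕ)} (hS : ∀ m ≤ n, β ≤ mProb m p S) :
    β ≤ mProb n q {x | Fin.tail x ∈ S} := by
  have hbinom : ∑ m ∈ range (n + 1), n.choose m * q 0 ^ (n - m) * (1 - q 0) ^ m = 1 := by
    have := add_pow (1 - q 0) (q 0) n
    rw [sub_add_cancel, one_pow] at this
    exact (sum_congr rfl fun m _ => by ring).trans this.symm
  calc β = ∑ m ∈ range (n + 1), n.choose m * q 0 ^ (n - m) * (1 - q 0) ^ m * β := by
        rw [← sum_mul, hbinom, one_mul]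
    _ ≤ ∑ m ∈ range (n + 1), n.choose m * q 0 ^ (n - m) * (1 - q 0) ^ m * mProb m p S := by
        gcongr with m hm
        exact hS m (Nat.lt_succ_iff.1 (mem_range.1 hm))
    _ = mProb n q {x | Fin.tail x ∈ S} := (mProb_tail_eq_sum hqp n S).symm

lemma isProb_tail_div (hq : IsProb q) (hq0 : q 0 < 1) :
    IsProb fun i : Fin d => q i.succ / (1 - q 0) := by
  have hsum := hq.2
  rw [Fin.sum_univ_succ] at hsum
  refine isProb_of_nonneg_of_sum_eq_one (fun i => div_nonneg (hq.1 _).1 (by linarith)) ?_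
  rw [← sum_div, div_eq_one_iff_eq (by linarith)]
  linarith

end SplitFirstCell

lemma ofReal_le_ofReal_div_of_mul_le {a b c : ℝ} (hb : 0 ≤ b) (hab : 0 < a + b)
    (h : c * b ≤ a) : ENNReal.ofReal c ≤ ENNReal.ofReal a / ENNReal.ofReal b := by
  rcases hb.eq_or_lt with rfl | hb
  · rw [ENNReal.ofReal_zero, ENNReal.div_zero (by simpa using hab)]
    exact le_top
  · rw [ENNReal.le_div_iff_mul_le (Or.inl (ENNReal.ofReal_pos.2 hb).ne')
      (Or.inl ENNReal.ofReal_ne_top), ← ENNReal.ofReal_mul' hb.le]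
    exact ENNReal.ofReal_le_ofReal h

section LatentClass

variable {π : Fin 2 → ℝ} {χ : Fin 2 → Fin 2 × Fin 2 → ℝ}

lemma isProb_mu2 (hπ : IsProb π) (hχ : IsMarkov χ) : IsProb (mu2 π χ) := by
  refine isProb_of_nonneg_of_sum_eq_one
    (fun j => sum_nonneg fun i _ => mul_nonneg (hπ.1 i).1 ((hχ i).1 j).1) ?_
  simp only [mu2]
  rw [sum_comm]
  simp only [← mul_sum, (hχ _).2, mul_one, hπ.2]

lemma mu1_chi1 (ι : Fin 2) :
    mu1 π (chi1 χ) ι = mu2 π χ (ι, 0) + mu2 π χ (ι, 1) := by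
  simp only [mu1, mu2, chi1, Fin.sum_univ_two]
  ring

lemma mu1_chi2 (ι : Fin 2) :
    mu1 π (chi2 χ) ι = mu2 π χ (0, ι) + mu2 π χ (1, ι) := by
  simp only [mu1, mu2, chi2, Fin.sum_univ_two]
  ring

lemma chi1_nonneg (hχ : IsMarkov χ) (i ι : Fin 2) : 0 ≤ chi1 χ i ι :=
  add_nonneg ((hχ i).1 _).1 ((hχ i).1 _).1

lemma chi2_nonneg (hχ : IsMarkov χ) (i ι : Fin 2) : 0 ≤ chi2 χ i ι :=
  add_nonneg ((hχ i).1 _).1 ((hχ i).1 _).1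

lemma chi1_add_chi1 (hχ : IsMarkov χ) (i : Fin 2) : chi1 χ i 0 + chi1 χ i 1 = 1 := by
  have := (hχ i).2
  simp only [Fintype.sum_prod_type, Fin.sum_univ_two] at this
  simp only [chi1]
  linarith

lemma chi2_add_chi2 (hχ : IsMarkov χ) (i : Fin 2) : chi2 χ i 0 + chi2 χ i 1 = 1 := by
  have := (hχ i).2
  simp only [Fintype.sum_prod_type, Fin.sum_univ_two] at this
  simp only [chi2]
  linarith

lemma chi1_le_one (hχ : IsMarkov χ) (i ι : Fin 2) : chi1 χ i ι ≤ 1 := by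
  have := chi1_add_chi1 hχ i
  fin_cases ι <;> simp only [Fin.zero_eta, Fin.mk_one] <;>
    linarith [chi1_nonneg hχ i 0, chi1_nonneg hχ i 1]

lemma chi1_mul_mu1_chi2_le (hπ : IsProb π) (hχ : IsMarkov χ) (hord : chi1 χ 0 0 ≤ chi2 χ 0 0) :
    chi1 χ 1 1 * mu1 π (chi2 χ) 1 ≤ mu1 π (chi1 χ) 1 := by
  have hc := chi1_le_one hχ 1 1
  have h0 : chi1 χ 1 1 * chi2 χ 0 1 ≤ chi1 χ 0 1 := by
    nlinarith [chi1_add_chi1 hχ 0, chi2_add_chi2 hχ 0, chi2_nonneg hχ 0 1]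
  have h1 : chi1 χ 1 1 * chi2 χ 1 1 ≤ chi1 χ 1 1 := by
    nlinarith [chi2_add_chi2 hχ 1, chi2_nonneg hχ 1 0, chi1_nonneg hχ 1 1]
  simp only [mu1, Fin.sum_univ_two]
  nlinarith [(hπ.1 0).1, (hπ.1 1).1]

end LatentClass

def cellEquiv : Fin (3 + 1) ≃ Fin 2 × Fin 2 where
  toFun := ![(0, 0), (1, 0), (0, 1), (1, 1)]
  invFun x := ![![0, 2], ![1, 3]] x.1 x.2
  left_inv := by decide
  right_inv := by decide

lemma tail_comp_cellEquiv (k : Fin 2 × Fin 2 → ℕ) :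
    Fin.tail (k ∘ cellEquiv) = ![k (1, 0), k (0, 1), k (1, 1)] := by
  ext i; fin_cases i <;> rfl

lemma exists_isProb_tail_mul_le {q : Fin 4 → ℝ} (hq : IsProb q) {c : ℝ}
    (hc : c * (q 2 + q 3) ≤ q 1 + q 3) :
    ∃ p : Fin 3 → ℝ, IsProb p ∧ (∀ i, q i.succ = (1 - q 0) * p i) ∧ c * (1 - p 0) ≤ 1 - p 1 := by
  have hsum := hq.2
  simp only [Fin.sum_univ_four] at hsum
  rcases (hq.1 0).2.lt_or_eq with hq0 | hq0
  · have hpos : 0 < 1 - q 0 := by linarith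
    refine ⟨_, isProb_tail_div hq hq0, fun i => by field_simp, ?_⟩
    have hp0 : 1 - q 1 / (1 - q 0) = (q 2 + q 3) / (1 - q 0) := by field_simp; linarith
    have hp1 : 1 - q 2 / (1 - q 0) = (q 1 + q 3) / (1 - q 0) := by field_simp; linarith
    simp only [Fin.succ_zero_eq_one, Fin.succ_one_eq_two, hp0, hp1, ← mul_div_assoc]
    exact div_le_div_of_nonneg_right hc hpos.le
  · -- `q` sits on the cell `0`, so every `p` factors it; `(1, 0, 0)` makes `1 - p 0` vanish.
    refine ⟨![1, 0, 0], isProb_of_nonneg_of_sum_eq_one ?_ ?_, fun i => ?_, by simp⟩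
    · intro i; fin_cases i <;> simp
    · simp [Fin.sum_univ_three]
    · have := (hq.1 1).1; have := (hq.1 2).1; have := (hq.1 3).1
      fin_cases i <;> simp [hq0] <;> linarith

lemma ofReal_le_min_div_of_isProb {p : Fin 3 → ℝ} (hp : IsProb p) {c : ℝ} (hc : c ≤ 1)
    (h : c * (1 - p 0) ≤ 1 - p 1) :
    ENNReal.ofReal c ≤ min (ENNReal.ofReal (1 - p 1) / ENNReal.ofReal (1 - p 0)) 1 := by
  have hsum := hp.2
  rw [Fin.sum_univ_three] at hsum
  refine le_min (ofReal_le_ofReal_div_of_mul_le ?_ ?_ h) (ENNReal.ofReal_le_one.2 hc)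
  · linarith [(hp.1 0).2]
  · linarith [(hp.1 2).1]

theorem stmt_3_general (β : ℝ) (n : ℕ)
    (u : (Fin 3 → ℕ) → ℝ≥0∞)
    (hu : ∀ m : ℕ, m ≤ n → ∀ p : Fin 3 → ℝ, IsProb p →
      β ≤ mProb m p {j | min (ENNReal.ofReal (1 - p 1) / ENNReal.ofReal (1 - p 0)) 1
        ≤ u j}) :
    ∀ π : Fin 2 → ℝ, ∀ χ : Fin 2 → Fin 2 × Fin 2 → ℝ, IsProb π → IsMarkov χ →
      chi1 χ 0 0 ≤ chi2 χ 0 0 →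
      β ≤ mProb n (mu2 π χ)
        {k | ENNReal.ofReal (chi1 χ 1 1) ≤ u ![k (1, 0), k (0, 1), k (1, 1)]} := by
  intro π χ hπ hχ hord
  have hq := (isProb_mu2 hπ hχ).comp_equiv cellEquiv
  have hkey := chi1_mul_mu1_chi2_le hπ hχ hord
  rw [mu1_chi1, mu1_chi2] at hkey
  obtain ⟨p, hp, hqp, hcp⟩ := exists_isProb_tail_mul_le hq hkey
  have hbound := ofReal_le_min_div_of_isProb hp (chi1_le_one hχ 1 1) hcp
  have hS : ∀ m ≤ n, β ≤ mProb m p {j | ENNReal.ofReal (chi1 χ 1 1) ≤ u j} := fun m hm =>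
    (hu m hm p hp).trans (mProb_mono (fun i => (hp.1 i).1) m fun j hj => hbound.trans hj)
  have h := le_mProb_tail (hq.1 0).1 (hq.1 0).2 hqp hS
  rw [mProb_comp_equiv] at h
  simpa only [Set.mem_ofPred_eq, tail_comp_cellEquiv] using h

/-- Theorem 2: if, for every sample size `m ≤ n`, `u` restricted to `{j : j₊ = m}` is
an upper β-confidence bound for `p ↦ min((1-p₂)/(1-p₁), 1)` (with `x/0 = ∞` for
`x > 0`, realized by `ℝ≥0∞`-division) in the trinomial model, then
`k ↦ u(k₁₀, k₀₁, k₁₁)` is an upper β-confidence bound for the sensitivity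
`(π,χ) ↦ χ^{(1)}_{1|1}` of the first test in the restricted latent class model. -/
theorem stmt_3 (β : ℝ) (hβ : β ∈ Set.Icc (0:ℝ) 1) (n : ℕ) (hn : 0 < n)
    (u : (Fin 3 → ℕ) → ℝ≥0∞)
    (hu : ∀ m : ℕ, m ≤ n → ∀ p : Fin 3 → ℝ, IsProb p →
      β ≤ mProb m p {j | min (ENNReal.ofReal (1 - p 1) / ENNReal.ofReal (1 - p 0)) 1
        ≤ u j}) :
    ∀ π : Fin 2 → ℝ, ∀ χ : Fin 2 → Fin 2 × Fin 2 → ℝ, IsProb π → IsMarkov χ →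
      chi1 χ 0 0 ≤ chi2 χ 0 0 →
      β ≤ mProb n (mu2 π χ)
        {k | ENNReal.ofReal (chi1 χ 1 1) ≤ u ![k (1, 0), k (0, 1), k (1, 1)]} :=
  stmt_3_general β n u hu
end
end

section
/- Lemma (set B≤, restricted model). Let q ∈ Prob({0,1}²) and μ := μ₂. Then the set B≤ := {(π₁, χ^{(1)}_{1|1}, χ^{(2)}_{1|1}) : (π,χ) ∈ Θ₂, μ(π,χ) = q, χ^{(1)}_{0|0} ≤ χ^{(2)}_{0|0}} is nonempty and equals the set of all (Pr, Se₁, Se₂) ∈ [0,1]³ satisfying: −q₀₀ ≤ Pr·(Se₁+Se₂−1) ≤ q₁₁; Pr − q_{0+} ≤ Pr·Se₁ ≤ q_{1+}; Pr − q_{+0} ≤ Pr·Se₂ ≤ q_{+1}; and q₀₁ − q₁₀ ≤ Pr·(Se₂−Se₁) ≤ q₀₁. -/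
open scoped BigOperators

noncomputable section

/-!
Write `a := π₁ χ_{·|1}`, the joint law of the two test results among the diseased; then
`q - a = π₀ χ_{·|0}`, and `(π, χ)` is recovered from `a` by normalising both parts. So the model
amounts to `0 ≤ a ≤ q` together with `q₀₁ - a₀₁ ≤ q₁₀ - a₁₀` (the restriction), and the triple to
`Pr = ∑ a`, `Pr·Se₁ = a₁₀ + a₁₁`, `Pr·Se₂ = a₀₁ + a₁₁`. Given these three sums, `a` has the single
free entry `a₁₁`, and the stated inequalities say exactly that the interval of admissible values
of `a₁₁` is nonempty. An empty class (`Pr ∈ {0, 1}`) leaves its conditional law free, which is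
chosen to match the prescribed rates and the restriction.
-/

open Set

lemma sum_univ_fin_two_prod {M : Type*} [AddCommMonoid M] (f : Fin 2 × Fin 2 → M) :
    ∑ x, f x = f (0, 0) + f (0, 1) + f (1, 0) + f (1, 1) := by
  simp only [Fintype.sum_prod_type, Fin.sum_univ_two, add_assoc]

lemma IsProb.nonneg {X : Type*} [Fintype X] {p : X → ℝ} (hp : IsProb p) (x : X) : 0 ≤ p x :=
  (hp.1 x).1

lemma IsProb.add_mem_Icc {X : Type*} [Fintype X] {p : X → ℝ} (hp : IsProb p) {x y : X}
    (hxy : x ≠ y) : p x + p y ∈ Icc 0 1 := by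
  refine ⟨add_nonneg (hp.nonneg x) (hp.nonneg y), ?_⟩
  classical
  rw [← Finset.sum_pair hxy, ← hp.2]
  exact Finset.sum_le_sum_of_subset_of_nonneg (Finset.subset_univ _) fun z _ _ => hp.nonneg z

section Normalize

variable {Y : Type*} [Fintype Y]

def normalizeOr (a f : Y → ℝ) : Y → ℝ :=
  if ∑ y, a y = 0 then f else fun y => a y / ∑ y, a y

variable {a f : Y → ℝ}

lemma isProb_normalizeOr (ha : ∀ y, 0 ≤ a y) (hf : IsProb f) : IsProb (normalizeOr a f) := by
  unfold normalizeOr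
  split_ifs with h
  · exact hf
  have hpos : 0 < ∑ y, a y := lt_of_le_of_ne (Finset.sum_nonneg fun y _ => ha y) (Ne.symm h)
  refine ⟨fun y => ⟨div_nonneg (ha y) hpos.le, (div_le_one hpos).2 ?_⟩, ?_⟩
  · exact Finset.single_le_sum (fun y _ => ha y) (Finset.mem_univ y)
  · rw [← Finset.sum_div, div_self h]

lemma sum_mul_normalizeOr (ha : ∀ y, 0 ≤ a y) (y : Y) :
    (∑ y, a y) * normalizeOr a f y = a y := by
  unfold normalizeOr
  split_ifs with h
  · rw [h, zero_mul, ((Finset.sum_eq_zero_iff_of_nonneg fun y _ => ha y).1 h y (Finset.mem_univ y))]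
  · exact mul_div_cancel₀ _ h

lemma normalizeOr_le_normalizeOr (ha : ∀ y, 0 ≤ a y) {y z : Y} (hf : f y ≤ f z)
    (hyz : a y ≤ a z) : normalizeOr a f y ≤ normalizeOr a f z := by
  unfold normalizeOr
  split_ifs
  · exact hf
  · exact div_le_div_of_nonneg_right hyz (Finset.sum_nonneg fun y _ => ha y)

end Normalize

def indepPair (p₁ p₂ : ℝ) : Fin 2 × Fin 2 → ℝ :=
  fun x => ![1 - p₁, p₁] x.1 * ![1 - p₂, p₂] x.2

lemma isProb_indepPair {p₁ p₂ : ℝ} (h₁ : p₁ ∈ Icc 0 1) (h₂ : p₂ ∈ Icc 0 1) :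
    IsProb (indepPair p₁ p₂) := by
  obtain ⟨h₁0, h₁1⟩ := h₁
  obtain ⟨h₂0, h₂1⟩ := h₂
  refine ⟨?_, ?_⟩
  · rintro ⟨j, k⟩
    fin_cases j <;> fin_cases k <;> simp [indepPair] <;> constructor <;>
      nlinarith [mul_nonneg h₁0 h₂0, mul_nonneg (sub_nonneg.2 h₁1) (sub_nonneg.2 h₂1)]
  · simp [sum_univ_fin_two_prod, indepPair]
    ring

/-- `a` stands for `π₁ χ_{·|1}` and `q - a` for `π₀ χ_{·|0}`; the restriction
`χ^{(1)}_{0|0} ≤ χ^{(2)}_{0|0}` reads `χ_{01|0} ≤ χ_{10|0}`. -/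
def IsDiseasedPart (q a : Fin 2 × Fin 2 → ℝ) : Prop :=
  (∀ x, 0 ≤ a x ∧ a x ≤ q x) ∧ q (0, 1) - a (0, 1) ≤ q (1, 0) - a (1, 0)

/-- The bounds of the theorem, in the coordinates `P = Pr`, `s = Pr·Se₁`, `t = Pr·Se₂`. -/
def CompatBounds (q : Fin 2 × Fin 2 → ℝ) (P s t : ℝ) : Prop :=
  -q (0, 0) ≤ s + t - P ∧ s + t - P ≤ q (1, 1) ∧
  P - (q (0, 0) + q (0, 1)) ≤ s ∧ s ≤ q (1, 0) + q (1, 1) ∧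
  P - (q (0, 0) + q (1, 0)) ≤ t ∧ t ≤ q (0, 1) + q (1, 1) ∧
  q (0, 1) - q (1, 0) ≤ t - s ∧ t - s ≤ q (0, 1)

lemma IsDiseasedPart.compatBounds {q a : Fin 2 × Fin 2 → ℝ} (ha : IsDiseasedPart q a) :
    CompatBounds q (∑ x, a x) (a (1, 0) + a (1, 1)) (a (0, 1) + a (1, 1)) := by
  obtain ⟨hb, hr⟩ := ha
  rw [sum_univ_fin_two_prod]
  have h00 := hb (0, 0); have h01 := hb (0, 1); have h10 := hb (1, 0); have h11 := hb (1, 1)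
  refine ⟨?_, ?_, ?_, ?_, ?_, ?_, ?_, ?_⟩ <;> linarith

/-- The entry `a₁₁` is free; the bounds are exactly what makes its lower bounds
`0, s - q₁₀, t - q₀₁, s + t - P` lie below its upper bounds `q₁₁, s, t, q₀₀ + s + t - P`. -/
lemma exists_isDiseasedPart {q : Fin 2 × Fin 2 → ℝ} (hq : ∀ x, 0 ≤ q x) {P s t : ℝ}
    (hb : CompatBounds q P s t) (hs : 0 ≤ s) (ht : 0 ≤ t) (hsP : s ≤ P) (htP : t ≤ P) :
    ∃ a, IsDiseasedPart q a ∧ ∑ x, a x = P ∧ a (1, 0) + a (1, 1) = s ∧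
      a (0, 1) + a (1, 1) = t := by
  obtain ⟨h1, h2, h3, h4, h5, h6, h7, h8⟩ := hb
  set u := max (max 0 (s - q (1, 0))) (max (t - q (0, 1)) (s + t - P))
  have hlow : 0 ≤ u ∧ s - q (1, 0) ≤ u ∧ t - q (0, 1) ≤ u ∧ s + t - P ≤ u := by
    simp only [u, le_max_iff, le_refl, true_or, or_true, and_self]
  have hup : u ≤ q (1, 1) ∧ u ≤ s ∧ u ≤ t ∧ u ≤ q (0, 0) + s + t - P := by
    have := hq (0, 0); have := hq (0, 1); have := hq (1, 0); have := hq (1, 1)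
    simp only [u, max_le_iff]
    refine ⟨⟨⟨?_, ?_⟩, ?_, ?_⟩, ⟨⟨?_, ?_⟩, ?_, ?_⟩, ⟨⟨?_, ?_⟩, ?_, ?_⟩, ⟨⟨?_, ?_⟩, ?_, ?_⟩⟩ <;>
      linarith
  refine ⟨fun x => !![P - s - t + u, t - u; s - u, u] x.1 x.2, ⟨?_, ?_⟩, ?_, ?_, ?_⟩
  · rintro ⟨j, k⟩
    fin_cases j <;> fin_cases k <;> simp <;> constructor <;> linarith
  · simp only [Matrix.of_apply, Matrix.cons_val', Matrix.cons_val_zero, Matrix.cons_val_one,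
      Matrix.cons_val_fin_one]
    linarith
  · simp only [sum_univ_fin_two_prod, Matrix.of_apply, Matrix.cons_val', Matrix.cons_val_zero,
      Matrix.cons_val_one, Matrix.cons_val_fin_one]
    ring
  all_goals simp

def restrictedTriples (q : Fin 2 × Fin 2 → ℝ) : Set (ℝ × ℝ × ℝ) :=
  {x | ∃ π : Fin 2 → ℝ, ∃ χ : Fin 2 → Fin 2 × Fin 2 → ℝ,
    IsProb π ∧ IsMarkov χ ∧ mu2 π χ = q ∧ chi1 χ 0 0 ≤ chi2 χ 0 0 ∧
    x = (π 1, chi1 χ 1 1, chi2 χ 1 1)}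

section Model

variable {q a : Fin 2 × Fin 2 → ℝ}

lemma isDiseasedPart_of_model {π : Fin 2 → ℝ} {χ : Fin 2 → Fin 2 × Fin 2 → ℝ}
    (hπ : IsProb π) (hχ : IsMarkov χ) (hμ : mu2 π χ = q) (hsp : chi1 χ 0 0 ≤ chi2 χ 0 0) :
    IsDiseasedPart q fun x => π 1 * χ 1 x := by
  have hq : ∀ x, q x = π 0 * χ 0 x + π 1 * χ 1 x := fun x => by
    rw [← hμ, mu2, Fin.sum_univ_two]
  have h0 : ∀ x, 0 ≤ π 0 * χ 0 x := fun x => mul_nonneg (hπ.nonneg 0) ((hχ 0).nonneg x)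
  refine ⟨fun x => ⟨mul_nonneg (hπ.nonneg 1) ((hχ 1).nonneg x), by linarith [hq x, h0 x]⟩, ?_⟩
  have : π 0 * χ 0 (0, 1) ≤ π 0 * χ 0 (1, 0) := by
    refine mul_le_mul_of_nonneg_left ?_ (hπ.nonneg 0)
    simp only [chi1, chi2] at hsp
    linarith
  linarith [hq (0, 1), hq (1, 0)]

/-- The model is `π = (1 - ∑ a, ∑ a)`, `χ_{·|1} ∝ a`, `χ_{·|0} ∝ q - a`. -/
lemma exists_model_of_isDiseasedPart (hq : IsProb q) (ha : IsDiseasedPart q a) {Se₁ Se₂ : ℝ}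
    (h₁ : Se₁ ∈ Icc 0 1) (h₂ : Se₂ ∈ Icc 0 1) (hs : a (1, 0) + a (1, 1) = (∑ x, a x) * Se₁)
    (ht : a (0, 1) + a (1, 1) = (∑ x, a x) * Se₂) :
    (∑ x, a x, Se₁, Se₂) ∈ restrictedTriples q := by
  set P := ∑ x, a x
  have ha0 : ∀ x, 0 ≤ a x := fun x => (ha.1 x).1
  have hb0 : ∀ x, 0 ≤ q x - a x := fun x => sub_nonneg.2 (ha.1 x).2
  have hbsum : ∑ x, (q x - a x) = 1 - P := by rw [Finset.sum_sub_distrib, hq.2]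
  have hP : P ∈ Icc 0 1 := ⟨Finset.sum_nonneg fun x _ => ha0 x,
    sub_nonneg.1 (hbsum ▸ Finset.sum_nonneg fun x _ => hb0 x)⟩
  set χ₀ := normalizeOr (fun x => q x - a x) (indepPair (1 / 2) (1 / 2))
  set χ₁ := normalizeOr a (indepPair Se₁ Se₂)
  have hrate : ∀ {r : ℝ} {y z : Fin 2 × Fin 2}, a y + a z = P * r →
      indepPair Se₁ Se₂ y + indepPair Se₁ Se₂ z = r → χ₁ y + χ₁ z = r := by
    intro r y z har hfr
    by_cases hP0 : P = 0
    · rwa [show χ₁ = indepPair Se₁ Se₂ from if_pos hP0]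
    · refine mul_left_cancel₀ hP0 ?_
      rw [mul_add, sum_mul_normalizeOr ha0, sum_mul_normalizeOr ha0, har]
  refine ⟨![1 - P, P], ![χ₀, χ₁], ⟨?_, ?_⟩, ?_, ?_, ?_, ?_⟩
  · intro i
    fin_cases i
    · simpa using And.symm hP
    · exact hP
  · simp
  · intro i
    fin_cases i
    · exact isProb_normalizeOr hb0 (isProb_indepPair (by norm_num) (by norm_num))
    · exact isProb_normalizeOr ha0 (isProb_indepPair h₁ h₂)
  · funext x
    simp only [mu2, Fin.sum_univ_two, Matrix.cons_val_zero, Matrix.cons_val_one]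
    rw [← hbsum, sum_mul_normalizeOr hb0, sum_mul_normalizeOr ha0]
    ring
  · simp only [chi1, chi2, Matrix.cons_val_zero, add_le_add_iff_left]
    exact normalizeOr_le_normalizeOr hb0 (by norm_num [indepPair]) (by linarith [ha.2])
  · exact Prod.ext rfl (Prod.ext (hrate hs (by simp [indepPair]; ring)).symm
      (hrate ht (by simp [indepPair]; ring)).symm)

lemma compatBounds_of_model {π : Fin 2 → ℝ} {χ : Fin 2 → Fin 2 × Fin 2 → ℝ}
    (hπ : IsProb π) (hχ : IsMarkov χ) (hμ : mu2 π χ = q) (hsp : chi1 χ 0 0 ≤ chi2 χ 0 0) :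
    CompatBounds q (π 1) (π 1 * chi1 χ 1 1) (π 1 * chi2 χ 1 1) := by
  convert (isDiseasedPart_of_model hπ hχ hμ hsp).compatBounds using 1
  · rw [← Finset.mul_sum, (hχ 1).2, mul_one]
  all_goals simp only [chi1, chi2, mul_add]

end Model

lemma mem_restrictedTriples_iff {q : Fin 2 × Fin 2 → ℝ} (hq : IsProb q) {P Se₁ Se₂ : ℝ} :
    (P, Se₁, Se₂) ∈ restrictedTriples q ↔
      P ∈ Icc 0 1 ∧ Se₁ ∈ Icc 0 1 ∧ Se₂ ∈ Icc 0 1 ∧ CompatBounds q P (P * Se₁) (P * Se₂) := by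
  constructor
  · rintro ⟨π, χ, hπ, hχ, hμ, hsp, hx⟩
    obtain ⟨rfl, rfl, rfl⟩ : P = π 1 ∧ Se₁ = chi1 χ 1 1 ∧ Se₂ = chi2 χ 1 1 := by
      simpa only [Prod.mk.injEq] using hx
    exact ⟨hπ.1 1, (hχ 1).add_mem_Icc (by decide), (hχ 1).add_mem_Icc (by decide),
      compatBounds_of_model hπ hχ hμ hsp⟩
  · rintro ⟨hP, h₁, h₂, hb⟩
    obtain ⟨a, ha, hsum, hs, ht⟩ := exists_isDiseasedPart hq.nonneg hb (mul_nonneg hP.1 h₁.1)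
      (mul_nonneg hP.1 h₂.1) (mul_le_of_le_one_right hP.1 h₁.2) (mul_le_of_le_one_right hP.1 h₂.2)
    rw [← hsum]
    exact exists_model_of_isDiseasedPart hq ha h₁ h₂ (by rw [hsum, hs]) (by rw [hsum, ht])

/-- Lemma (set B≤, restricted model): the set of triples `(Pr, Se₁, Se₂)` compatible
with `q` under the restriction `Sp₁ ≤ Sp₂`. -/
theorem stmt_12 (q : Fin 2 × Fin 2 → ℝ) (hq : IsProb q) :
    Set.Nonempty {x : ℝ × ℝ × ℝ |
        ∃ π : Fin 2 → ℝ, ∃ χ : Fin 2 → Fin 2 × Fin 2 → ℝ,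
          IsProb π ∧ IsMarkov χ ∧ mu2 π χ = q ∧ chi1 χ 0 0 ≤ chi2 χ 0 0 ∧
          x = (π 1, chi1 χ 1 1, chi2 χ 1 1)} ∧
    {x : ℝ × ℝ × ℝ |
        ∃ π : Fin 2 → ℝ, ∃ χ : Fin 2 → Fin 2 × Fin 2 → ℝ,
          IsProb π ∧ IsMarkov χ ∧ mu2 π χ = q ∧ chi1 χ 0 0 ≤ chi2 χ 0 0 ∧
          x = (π 1, chi1 χ 1 1, chi2 χ 1 1)} =
    {x : ℝ × ℝ × ℝ |
        x.1 ∈ Set.Icc (0:ℝ) 1 ∧ x.2.1 ∈ Set.Icc (0:ℝ) 1 ∧ x.2.2 ∈ Set.Icc (0:ℝ) 1 ∧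
        -q (0, 0) ≤ x.1 * (x.2.1 + x.2.2 - 1) ∧ x.1 * (x.2.1 + x.2.2 - 1) ≤ q (1, 1) ∧
        x.1 - (q (0, 0) + q (0, 1)) ≤ x.1 * x.2.1 ∧ x.1 * x.2.1 ≤ q (1, 0) + q (1, 1) ∧
        x.1 - (q (0, 0) + q (1, 0)) ≤ x.1 * x.2.2 ∧ x.1 * x.2.2 ≤ q (0, 1) + q (1, 1) ∧
        q (0, 1) - q (1, 0) ≤ x.1 * (x.2.2 - x.2.1) ∧ x.1 * (x.2.2 - x.2.1) ≤ q (0, 1)} := by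
  change (restrictedTriples q).Nonempty ∧ restrictedTriples q = _
  have hq_self : IsDiseasedPart q q := ⟨fun x => ⟨hq.nonneg x, le_rfl⟩, by simp⟩
  have hq_rate : ∀ {x y : Fin 2 × Fin 2}, q x + q y = (∑ z, q z) * (q x + q y) := by
    intro x y; rw [hq.2, one_mul]
  refine ⟨⟨_, exists_model_of_isDiseasedPart hq hq_self (hq.add_mem_Icc (by decide))
    (hq.add_mem_Icc (by decide)) hq_rate hq_rate⟩, ?_⟩
  ext ⟨P, Se₁, Se₂⟩
  rw [mem_restrictedTriples_iff hq]
  simp only [CompatBounds, mem_ofPred_eq, mul_add, mul_sub, mul_one]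


end
end
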